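/- Let H_seg = Σ_j H_j where each per-segment handling time satisfies H_j = A_j* + B_j + Σ_{k∈hp} (⌈H_j/T_k⌉+1)·A_k*, and let H_chain = Σ_j (A_j* + B_j) + Σ_{k∈hp} (⌈R⌉/T_k⌉+1)·A_k* with R ≥ max_j H_j. Then neither bound dominates the other in general: there exist parameter instances where H_seg < H_chain and instances where H_chain < H_seg. -/
import Mathlib


/-- Neither the per-segment handling-time bound
`H_seg = Σ_j H_j` (where each `H_j` solves
`H_j = A_j* + B_j + Σ_{k∈hp} (⌈H_j/T_k⌉+1)·A_k*`) nor the per-chain bound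
`H_chain = Σ_j (A_j* + B_j) + Σ_{k∈hp} (⌈R/T_k⌉+1)·A_k*` (with `R ≥ max_j H_j`)
dominates the other: there are parameter instances with `H_seg < H_chain` and
instances with `H_chain < H_seg`. -/
theorem per_segment_vs_per_chain_incomparable :
    (∃ (n m : ℕ) (Aseg Bseg : Fin n → ℝ) (Ahp T : Fin m → ℝ)
        (Hj : Fin n → ℝ) (R : ℝ),
      (∀ j, 0 ≤ Aseg j) ∧ (∀ j, 0 ≤ Bseg j) ∧
      (∀ k, 0 ≤ Ahp k) ∧ (∀ k, 0 < T k) ∧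
      (∀ j, Hj j = Aseg j + Bseg j +
        ∑ k, ((⌈Hj j / T k⌉ : ℝ) + 1) * Ahp k) ∧
      (∀ j, Hj j ≤ R) ∧
      (∑ j, Hj j) <
        (∑ j, (Aseg j + Bseg j)) + ∑ k, ((⌈R / T k⌉ : ℝ) + 1) * Ahp k) ∧
    (∃ (n m : ℕ) (Aseg Bseg : Fin n → ℝ) (Ahp T : Fin m → ℝ)
        (Hj : Fin n → ℝ) (R : ℝ),
      (∀ j, 0 ≤ Aseg j) ∧ (∀ j, 0 ≤ Bseg j) ∧
      (∀ k, 0 ≤ Ahp k) ∧ (∀ k, 0 < T k) ∧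
      (∀ j, Hj j = Aseg j + Bseg j +
        ∑ k, ((⌈Hj j / T k⌉ : ℝ) + 1) * Ahp k) ∧
      (∀ j, Hj j ≤ R) ∧
      (∑ j, (Aseg j + Bseg j)) + (∑ k, ((⌈R / T k⌉ : ℝ) + 1) * Ahp k) <
        ∑ j, Hj j) := by
  constructor
  · refine ⟨1, 1, fun _ => 0, fun _ => 0, fun _ => 1, fun _ => 2, fun _ => 2, 3,
      fun _ => le_refl _, fun _ => le_refl _, fun _ => zero_le_one, fun _ => two_pos,
      fun _ => ?_, fun _ => by norm_num, ?_⟩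
    · simp [Fin.sum_univ_succ]; norm_num
    · simp [Fin.sum_univ_succ]
      rw [show ⌈(3:ℝ)/2⌉ = 2 from by norm_num [Int.ceil_eq_iff]]
      norm_num
  · refine ⟨2, 1, fun _ => 0, fun _ => 0, fun _ => 1, fun _ => 2, fun _ => 2, 2,
      fun _ => le_refl _, fun _ => le_refl _, fun _ => zero_le_one, fun _ => two_pos,
      fun _ => ?_, fun _ => le_refl _, ?_⟩ <;>
    · simp [Fin.sum_univ_succ]
      norm_num
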